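/- arXiv:1612.07540 — 2 statements merged into one kernel-verified Lean document; each statement's English description precedes it below -/
import Mathlib

section
/- Unfolding lemma: Let P be a finite connected poset with A = Min(P), B = Max(P) and dim(A,B) ≥ 2. Let A_0, B_1, A_1, …, A_{m−1}, B_m be the unfolding of P from some x_0 ∈ A ∪ B. Then there exists an index i such that dim(A_i, B_i) ≥ dim(A,B)/2 or dim(A_i, B_{i+1}) ≥ dim(A,B)/2. -/
/-!
Write an incomparable pair `(a, b)` of `Min × Max` as `a ∈ A_i`, `b ∈ B_j`. If `j ≤ i` then
`β b = j ≤ i = β a`, and if `i < j` then `α a = i ≤ j - 1 = α b`, where `β` is monotone and `α`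
antitone. Reversible families chosen on the separate levels of a monotone function glue to one
reversible family (pairs going strictly down in the level are reversed for free), and a pair on
a single level of `β` (resp. `α`) lies in `Inc(A_i, B_i)` (resp. `Inc(A_i, B_{i+1})`). So if all
these dimensions are at most `d`, each kind of pair is covered by `d` reversible sets and
`dim(A, B) ≤ 2d`.
-/

section Defs
variable (α : Type*) [PartialOrder α]

/-- `L` is a linear extension of the partial order on `α`. -/
def IsLinExt (L : LinearOrder α) : Prop := ∀ x y : α, x ≤ y → L.le x y

/-- The poset `α` is the intersection of `d` linear extensions. -/
def HasRealizer (d : ℕ) : Prop :=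
  ∃ Ls : Fin d → LinearOrder α, (∀ i, IsLinExt α (Ls i)) ∧
    ∀ x y : α, (∀ i, (Ls i).le x y) → x ≤ y

/-- The order dimension of the poset `α`. -/
noncomputable def pdim : ℕ := sInf {d | HasRealizer α d}

/-- `x` and `y` are incomparable. -/
def IncompP (x y : α) : Prop := ¬ x ≤ y ∧ ¬ y ≤ x

/-- A set of (incomparable) pairs is reversible if some linear extension reverses all pairs. -/
def ReversibleSet (I : Set (α × α)) : Prop :=
  ∃ L : LinearOrder α, IsLinExt α L ∧ ∀ p ∈ I, L.lt p.2 p.1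

/-- `I` can be partitioned into `d` reversible sets. -/
def RevPart (I : Set (α × α)) (d : ℕ) : Prop :=
  ∃ J : Fin d → Set (α × α), (⋃ i, J i) = I ∧
    (∀ i j, i ≠ j → Disjoint (J i) (J j)) ∧ ∀ i, ReversibleSet α (J i)

/-- The least number of reversible sets partitioning `I` (with `revDim ∅ = 1`). -/
noncomputable def revDim (I : Set (α × α)) : ℕ := sInf {d | 0 < d ∧ RevPart α I d}

/-- Incomparable pairs `(a,b)` with `a ∈ A` and `b ∈ B`. -/
def IncPairs (A B : Set α) : Set (α × α) := {p | p.1 ∈ A ∧ p.2 ∈ B ∧ IncompP α p.1 p.2}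

noncomputable def dimAB (A B : Set α) : ℕ := revDim α (IncPairs α A B)

/-- The minimal elements of `α`. -/
def minimalSet : Set α := {x | ∀ y : α, y ≤ x → y = x}

/-- The maximal elements of `α`. -/
def maximalSet : Set α := {x | ∀ y : α, x ≤ y → y = x}

end Defs

section Unfold
variable (α : Type*) [PartialOrder α]

/-- The upset of a set. -/
def UpS (S : Set α) : Set α := {x | ∃ s ∈ S, s ≤ x}

/-- The downset of a set. -/
def DnS (S : Set α) : Set α := {x | ∃ s ∈ S, x ≤ s}

/-- The poset `α` is connected (w.r.t. its comparability/cover graph). -/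
def PosetConnected : Prop :=
  ∀ x y : α, Relation.ReflTransGen (fun u v : α => u ≤ v ∨ v ≤ u) x y

/-- Auxiliary recursion for the unfolding of `α` from starting sets `A0, B1`:
`unfoldAux A0 B1 i = ((A_i, B_{i+1}), (A_0 ∪ ⋯ ∪ A_i, B_1 ∪ ⋯ ∪ B_{i+1}))`. -/
def unfoldAux (A0 B1 : Set α) : ℕ → (Set α × Set α) × (Set α × Set α)
  | 0 => ((A0, B1), (A0, B1))
  | i + 1 =>
    let p := unfoldAux A0 B1 i
    let Ai : Set α := {a | a ∈ minimalSet α ∧ a ∉ p.2.1 ∧ ∃ b ∈ p.1.2, a ≤ b}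
    let Bi : Set α := {b | b ∈ maximalSet α ∧ b ∉ p.2.2 ∧ ∃ a ∈ Ai, a ≤ b}
    ((Ai, Bi), (p.2.1 ∪ Ai, p.2.2 ∪ Bi))

/-- The set `A_i` of the unfolding. -/
def uA (A0 B1 : Set α) (i : ℕ) : Set α := (unfoldAux α A0 B1 i).1.1

/-- The set `B_j` (for `j ≥ 1`) of the unfolding; `uB 0 = ∅` by convention. -/
def uB (A0 B1 : Set α) : ℕ → Set α
  | 0 => ∅
  | i + 1 => (unfoldAux α A0 B1 i).1.2

/-- The starting data of the unfolding of `α` from `x0 ∈ Min(α) ∪ Max(α)`. -/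
def UnfoldStart (x0 : α) (A0 B1 : Set α) : Prop :=
  (x0 ∈ minimalSet α ∧ A0 = {x0} ∧ B1 = {b | b ∈ maximalSet α ∧ x0 ≤ b}) ∨
  (x0 ∈ maximalSet α ∧ A0 = (∅ : Set α) ∧ B1 = {x0})

/-- `α(x)`: the least `i` with `x ∈ Up(A_i)`. -/
noncomputable def alphaF (A0 B1 : Set α) (x : α) : ℕ :=
  sInf {i | x ∈ UpS α (uA α A0 B1 i)}

/-- `β(x)`: the least `j ≥ 1` with `x ∈ D(B_j)`. -/
noncomputable def betaF (A0 B1 : Set α) (x : α) : ℕ :=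
  sInf {j | 1 ≤ j ∧ x ∈ DnS α (uB α A0 B1 j)}

/-- `y` is a valid parent of `x` in the unfolding. -/
def IsParentOf (A0 B1 : Set α) (x y : α) : Prop :=
  (betaF α A0 B1 x = alphaF α A0 B1 x ∧ x ⋖ y ∧
      ∃ b ∈ uB α A0 B1 (betaF α A0 B1 x), y ≤ b) ∨
  (betaF α A0 B1 x = alphaF α A0 B1 x + 1 ∧ y ⋖ x ∧
      ∃ a ∈ uA α A0 B1 (alphaF α A0 B1 x), a ≤ y)

end Unfold

section Reversible
variable {α : Type*} [PartialOrder α]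

theorem IncompP.ne {a b : α} (h : IncompP α a b) : a ≠ b :=
  fun hab => h.1 hab.le

theorem ReversibleSet.mono {S T : Set (α × α)} (hST : S ⊆ T) (hT : ReversibleSet α T) :
    ReversibleSet α S :=
  let ⟨L, hL, hrev⟩ := hT
  ⟨L, hL, fun p hp => hrev p (hST hp)⟩

/-- Szpilrajn: extend `r` to a linear order. -/
theorem ReversibleSet.of_isPartialOrder (r : α → α → Prop) [IsPartialOrder α r]
    (hle : ∀ x y : α, x ≤ y → r x y) {S : Set (α × α)} (hS : ∀ p ∈ S, p.1 ≠ p.2 ∧ r p.2 p.1) :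
    ReversibleSet α S := by
  obtain ⟨s, hs, hrs⟩ := extend_partialOrder r
  let L : LinearOrder α :=
    { le := s
      lt := fun x y => s x y ∧ ¬ s y x
      lt_iff_le_not_ge := fun _ _ => Iff.rfl
      le_refl := refl_of s
      le_trans := fun _ _ _ => trans_of s
      le_antisymm := fun _ _ => antisymm_of s
      le_total := total_of s
      toDecidableLE := Classical.decRel _ }
  refine ⟨L, fun x y hxy => hrs _ _ (hle x y hxy), fun p hp => ?_⟩
  have hsp : s p.2 p.1 := hrs _ _ (hS p hp).2
  exact show s p.2 p.1 ∧ ¬ s p.1 p.2 from ⟨hsp, fun h => (hS p hp).1 (antisymm_of s h hsp)⟩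

theorem reversibleSet_empty : ReversibleSet α ∅ :=
  ReversibleSet.of_isPartialOrder (· ≤ ·) (fun _ _ => id) (by simp)

/-- The order generated by `≤` and the reversed pairs of `S` is antisymmetric: `φ` only grows
along it, and inside a level it is contained in the linear extension reversing that level. -/
theorem ReversibleSet.of_levels {β : Type*} [PartialOrder β] (φ : α → β) (hφ : Monotone φ)
    {S : Set (α × α)} (hS : ∀ p ∈ S, p.1 ≠ p.2 ∧ φ p.2 ≤ φ p.1)
    (hlev : ∀ n, ReversibleSet α {p ∈ S | φ p.1 = n ∧ φ p.2 = n}) : ReversibleSet α S := by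
  choose L hL hrev using hlev
  let step : α → α → Prop := fun u v => u ≤ v ∨ (v, u) ∈ S
  let r := Relation.ReflTransGen step
  have step_le : ∀ u v, step u v → φ u ≤ φ v := by
    rintro u v (h | h)
    exacts [hφ h, (hS _ h).2]
  have r_le : ∀ u v, r u v → φ u ≤ φ v := fun u v h => by
    simpa only [Relation.reflTransGen_eq_self] using Relation.ReflTransGen.lift φ step_le u v h
  have r_level : ∀ u v, r u v → φ u = φ v → (L (φ u)).le u v := by
    intro u v h
    induction h with
    | refl => exact fun _ => (L _).le_refl _
    | @tail b c hub hbc ih =>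
      intro huc
      have hb : φ u = φ b := le_antisymm (r_le _ _ hub) (huc ▸ step_le _ _ hbc)
      refine (L _).le_trans _ _ _ (ih hb) ?_
      rcases hbc with hbc | hbc
      · exact hL _ _ _ hbc
      · exact @le_of_lt α (L _).toPreorder _ _ (hrev _ _ ⟨hbc, huc.symm, hb.symm⟩)
  have : IsPartialOrder α r :=
    { refl := fun _ => Relation.ReflTransGen.refl
      trans := fun _ _ _ => Relation.ReflTransGen.trans
      antisymm := fun u v huv hvu => by
        have h := le_antisymm (r_le _ _ huv) (r_le _ _ hvu)
        exact (L _).le_antisymm _ _ (r_level _ _ huv h) (h ▸ r_level _ _ hvu h.symm) }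
  exact ReversibleSet.of_isPartialOrder r (fun _ _ h => .single (.inl h))
    fun p hp => ⟨(hS p hp).1, .single (.inr hp)⟩

/-- `a` and `b` lie on different levels of `x ↦ (a ≤ x)`, so no level needs reversing. -/
theorem reversibleSet_singleton {a b : α} (h : IncompP α a b) : ReversibleSet α {(a, b)} := by
  refine ReversibleSet.of_levels (fun x => a ≤ x) (fun _ _ huv hu => hu.trans huv) ?_ fun n => ?_
  · rintro p rfl
    exact ⟨h.ne, fun _ => le_rfl⟩
  · refine reversibleSet_empty.mono ?_
    rintro p ⟨rfl, ha, hb⟩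
    exact h.1 ((hb.trans ha.symm).mpr le_rfl)

end Reversible

section Cover
variable {α : Type*} [PartialOrder α]

def RevCover (I : Set (α × α)) (d : ℕ) : Prop :=
  ∃ J : Fin d → Set (α × α), I ⊆ ⋃ k, J k ∧ ∀ k, ReversibleSet α (J k)

theorem RevCover.mono {I I' : Set (α × α)} {d : ℕ} (hI : I' ⊆ I) (h : RevCover I d) :
    RevCover I' d :=
  let ⟨J, hJ, hrev⟩ := h
  ⟨J, hI.trans hJ, hrev⟩

theorem revCover_empty (d : ℕ) : RevCover (∅ : Set (α × α)) d :=
  ⟨fun _ => ∅, Set.empty_subset _, fun _ => reversibleSet_empty⟩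

theorem RevCover.union {I I' : Set (α × α)} {d d' : ℕ} (h : RevCover I d) (h' : RevCover I' d') :
    RevCover (I ∪ I') (d + d') := by
  obtain ⟨J, hJ, hrev⟩ := h
  obtain ⟨J', hJ', hrev'⟩ := h'
  refine ⟨Fin.append J J', Set.union_subset ?_ ?_, Fin.addCases ?_ ?_⟩
  · refine hJ.trans (Set.iUnion_subset fun k => ?_)
    exact (Fin.append_left J J' k).symm ▸ Set.subset_iUnion (Fin.append J J') _
  · refine hJ'.trans (Set.iUnion_subset fun k => ?_)
    exact (Fin.append_right J J' k).symm ▸ Set.subset_iUnion (Fin.append J J') _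
  · simpa only [Fin.append_left] using hrev
  · simpa only [Fin.append_right] using hrev'

theorem RevCover.mono_right {I : Set (α × α)} {d d' : ℕ} (h : RevCover I d) (hd : d ≤ d') :
    RevCover I d' := by
  obtain ⟨m, rfl⟩ := Nat.exists_eq_add_of_le hd
  simpa using h.union (revCover_empty m)

theorem RevPart.revCover {I : Set (α × α)} {d : ℕ} (h : RevPart α I d) : RevCover I d :=
  let ⟨J, hJ, _, hrev⟩ := h
  ⟨J, hJ.ge, hrev⟩

theorem RevCover.revPart {I : Set (α × α)} {d : ℕ} (h : RevCover I d) : RevPart α I d := by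
  obtain ⟨J, hJ, hrev⟩ := h
  refine ⟨disjointed fun k => I ∩ J k, ?_, disjoint_disjointed _, fun k => ?_⟩
  · rw [iUnion_disjointed, ← Set.inter_iUnion, Set.inter_eq_left.2 hJ]
  · exact (hrev k).mono ((disjointed_subset _ k).trans Set.inter_subset_right)

theorem revDim_le_of_revCover {I : Set (α × α)} {d : ℕ} (hd : 0 < d) (h : RevCover I d) :
    revDim α I ≤ d :=
  Nat.sInf_le ⟨hd, h.revPart⟩

theorem exists_revCover [Finite α] {I : Set (α × α)} (hI : ∀ p ∈ I, IncompP α p.1 p.2) :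
    ∃ d, RevCover I d := by
  obtain ⟨d, ⟨e⟩⟩ := Finite.exists_equiv_fin I
  refine ⟨d, ⟨fun k => {(e.symm k : α × α)}, fun p hp => ?_, fun k => ?_⟩⟩
  · exact Set.mem_iUnion.2 ⟨e ⟨p, hp⟩, by simp⟩
  · exact reversibleSet_singleton (hI _ (e.symm k).2)

theorem revDim_pos_and_revPart [Finite α] {I : Set (α × α)} (hI : ∀ p ∈ I, IncompP α p.1 p.2) :
    0 < revDim α I ∧ RevPart α I (revDim α I) := by
  obtain ⟨d, h⟩ := exists_revCover hI
  exact Nat.sInf_mem (s := {d | 0 < d ∧ RevPart α I d})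
    ⟨d + 1, d.succ_pos, (h.mono_right d.le_succ).revPart⟩

theorem revCover_of_revDim_le [Finite α] {I : Set (α × α)} (hI : ∀ p ∈ I, IncompP α p.1 p.2)
    {d : ℕ} (h : revDim α I ≤ d) : RevCover I d :=
  (revDim_pos_and_revPart hI).2.revCover.mono_right h

theorem dimAB_pos [Finite α] (A B : Set α) : 0 < dimAB α A B :=
  (revDim_pos_and_revPart fun _ hp => hp.2.2).1

theorem revCover_of_dimAB_le [Finite α] {A B : Set α} {d : ℕ} (h : dimAB α A B ≤ d) :
    RevCover (IncPairs α A B) d :=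
  revCover_of_revDim_le (fun _ hp => hp.2.2) h

theorem RevCover.of_levels {β : Type*} [PartialOrder β] (φ : α → β) (hφ : Monotone φ)
    {S : Set (α × α)} (hS : ∀ p ∈ S, p.1 ≠ p.2 ∧ φ p.2 ≤ φ p.1) {d : ℕ} (hd : 0 < d)
    (R : β → Fin d → Set (α × α)) (hR : ∀ n k, ReversibleSet α (R n k))
    (hSR : ∀ p ∈ S, φ p.1 = φ p.2 → ∃ k, p ∈ R (φ p.1) k) : RevCover S d := by
  refine ⟨fun k => {p ∈ S | φ p.1 = φ p.2 → p ∈ R (φ p.1) k}, fun p hp => ?_, fun k => ?_⟩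
  · by_cases h : φ p.1 = φ p.2
    · obtain ⟨k, hk⟩ := hSR p hp h
      exact Set.mem_iUnion.2 ⟨k, hp, fun _ => hk⟩
    · exact Set.mem_iUnion.2 ⟨⟨0, hd⟩, hp, fun h' => absurd h' h⟩
  · refine ReversibleSet.of_levels φ hφ (fun p hp => hS p hp.1) fun n => (hR n k).mono ?_
    rintro p ⟨⟨-, hpR⟩, h1, h2⟩
    exact h1 ▸ hpR (h1.trans h2.symm)

end Cover

section Finite
variable {α : Type*} [PartialOrder α] [Finite α]

theorem exists_minimal_le (x : α) : ∃ a ∈ minimalSet α, a ≤ x := by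
  obtain ⟨a, hax, ha⟩ := Finite.exists_le_minimal (p := fun _ => True) (a := x) trivial
  exact ⟨a, fun y hy => le_antisymm hy (ha.2 trivial hy), hax⟩

theorem exists_le_maximal (x : α) : ∃ b ∈ maximalSet α, x ≤ b := by
  obtain ⟨b, hxb, hb⟩ := Finite.exists_le_maximal (p := fun _ => True) (a := x) trivial
  exact ⟨b, fun y hy => le_antisymm (hb.2 trivial hy) hy, hxb⟩

end Finite

section Unfolding
variable {α : Type*} [PartialOrder α] {x0 : α} {A0 B1 : Set α}

theorem pos_of_mem_uB {j : ℕ} {b : α} (hb : b ∈ uB α A0 B1 j) : 0 < j :=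
  Nat.pos_of_ne_zero fun h => by subst h; exact hb

theorem mem_unfoldAux_snd_fst_iff {i : ℕ} {x : α} :
    x ∈ (unfoldAux α A0 B1 i).2.1 ↔ ∃ j ≤ i, x ∈ uA α A0 B1 j := by
  induction i with
  | zero =>
    simp only [Nat.le_zero, exists_eq_left]
    rfl
  | succ i ih =>
    change x ∈ (unfoldAux α A0 B1 i).2.1 ∪ uA α A0 B1 (i + 1) ↔ _
    simp only [Set.mem_union, ih, Nat.le_succ_iff]
    grind

theorem mem_unfoldAux_snd_snd_iff {i : ℕ} {x : α} :
    x ∈ (unfoldAux α A0 B1 i).2.2 ↔ ∃ j ≤ i + 1, x ∈ uB α A0 B1 j := by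
  induction i with
  | zero =>
    refine ⟨fun h => ⟨1, le_rfl, h⟩, fun ⟨j, hj, h⟩ => ?_⟩
    obtain rfl : j = 1 := le_antisymm hj (pos_of_mem_uB h)
    exact h
  | succ i ih =>
    change x ∈ (unfoldAux α A0 B1 i).2.2 ∪ uB α A0 B1 (i + 2) ↔ _
    simp only [Set.mem_union, ih]
    grind

theorem eq_of_mem_uA {i i' : ℕ} {a : α} (h : a ∈ uA α A0 B1 i) (h' : a ∈ uA α A0 B1 i') :
    i = i' := by
  wlog hlt : i < i' generalizing i i'
  · exact (lt_or_eq_of_le (not_lt.1 hlt)).elim (fun h'' => (this h' h h'').symm) Eq.symm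
  obtain ⟨k, rfl⟩ := Nat.exists_eq_add_of_lt hlt
  exact absurd (mem_unfoldAux_snd_fst_iff.2 ⟨i, by omega, h⟩) h'.2.1

theorem eq_of_mem_uB {j j' : ℕ} {b : α} (h : b ∈ uB α A0 B1 j) (h' : b ∈ uB α A0 B1 j') :
    j = j' := by
  wlog hlt : j < j' generalizing j j'
  · exact (lt_or_eq_of_le (not_lt.1 hlt)).elim (fun h'' => (this h' h h'').symm) Eq.symm
  obtain ⟨k, rfl⟩ : ∃ k, j' = k + 2 := ⟨j' - 2, by have := pos_of_mem_uB h; omega⟩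
  exact absurd (mem_unfoldAux_snd_snd_iff.2 ⟨j, by omega, h⟩) h'.2.1

theorem exists_mem_uA_of_le_mem_uB {a b : α} {j : ℕ} (ha : a ∈ minimalSet α) (hab : a ≤ b)
    (hb : b ∈ uB α A0 B1 j) : ∃ i ≤ j, a ∈ uA α A0 B1 i := by
  obtain ⟨k, rfl⟩ : ∃ k, j = k + 1 := ⟨j - 1, by have := pos_of_mem_uB hb; omega⟩
  by_cases hcum : a ∈ (unfoldAux α A0 B1 k).2.1
  · obtain ⟨i, hi, h⟩ := mem_unfoldAux_snd_fst_iff.1 hcum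
    exact ⟨i, by omega, h⟩
  · exact ⟨k + 1, by omega, ha, hcum, b, hb, hab⟩

theorem exists_mem_upS_uA_of_mem_dnS_uB [Finite α] {x : α} {j : ℕ} (hx : x ∈ DnS α (uB α A0 B1 j)) :
    ∃ i, x ∈ UpS α (uA α A0 B1 i) := by
  obtain ⟨b, hb, hxb⟩ := hx
  obtain ⟨a, ha, hax⟩ := exists_minimal_le x
  obtain ⟨i, -, hai⟩ := exists_mem_uA_of_le_mem_uB ha (hax.trans hxb) hb
  exact ⟨i, a, hai, hax⟩

variable (hs : UnfoldStart α x0 A0 B1)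
include hs

theorem uA_subset_minimalSet (i : ℕ) : uA α A0 B1 i ⊆ minimalSet α := by
  rintro a ha
  cases i with
  | zero =>
    rcases hs with ⟨hx, hA, -⟩ | ⟨-, hA, -⟩
    · rw [uA, unfoldAux, hA] at ha
      exact ha ▸ hx
    · rw [uA, unfoldAux, hA] at ha
      exact ha.elim
  | succ i => exact ha.1

theorem uB_subset_maximalSet (j : ℕ) : uB α A0 B1 j ⊆ maximalSet α := by
  rintro b hb
  match j with
  | 0 => exact hb.elim
  | 1 =>
    rcases hs with ⟨-, -, hB⟩ | ⟨hx, -, hB⟩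
    · rw [uB, unfoldAux, hB] at hb
      exact hb.1
    · rw [uB, unfoldAux, hB] at hb
      exact hb ▸ hx
  | i + 2 => exact hb.1

theorem exists_mem_uB_of_mem_uA_le {a b : α} {i : ℕ} (hb : b ∈ maximalSet α)
    (ha : a ∈ uA α A0 B1 i) (hab : a ≤ b) : ∃ j ≤ i + 1, b ∈ uB α A0 B1 j := by
  cases i with
  | zero =>
    rcases hs with ⟨-, hA, hB⟩ | ⟨-, hA, -⟩
    · rw [uA, unfoldAux, hA] at ha
      subst ha
      exact ⟨1, le_rfl, by rw [uB, unfoldAux, hB]; exact ⟨hb, hab⟩⟩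
    · rw [uA, unfoldAux, hA] at ha
      exact ha.elim
  | succ k =>
    by_cases hcum : b ∈ (unfoldAux α A0 B1 k).2.2
    · obtain ⟨j, hj, h⟩ := mem_unfoldAux_snd_snd_iff.1 hcum
      exact ⟨j, by omega, h⟩
    · exact ⟨k + 2, le_rfl, hb, hcum, a, ha, hab⟩

theorem exists_mem_uA_le_of_mem_uB {a b : α} {i : ℕ} (ha : a ∈ uA α A0 B1 i)
    (hb : b ∈ uB α A0 B1 (i + 1)) : ∃ a' ∈ uA α A0 B1 i, a' ≤ b := by
  cases i with
  | zero =>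
    rcases hs with ⟨-, hA, hB⟩ | ⟨-, hA, -⟩
    · rw [uA, unfoldAux, hA] at ha ⊢
      rw [uB, unfoldAux, hB] at hb
      exact ⟨x0, rfl, hb.2⟩
    · rw [uA, unfoldAux, hA] at ha
      exact ha.elim
  | succ k => exact hb.2.2

variable [Finite α]

theorem exists_mem_dnS_uB_of_mem_upS_uA {x : α} {i : ℕ} (hx : x ∈ UpS α (uA α A0 B1 i)) :
    ∃ j, 1 ≤ j ∧ x ∈ DnS α (uB α A0 B1 j) := by
  obtain ⟨a, ha, hax⟩ := hx
  obtain ⟨b, hb, hxb⟩ := exists_le_maximal x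
  obtain ⟨j, -, hbj⟩ := exists_mem_uB_of_mem_uA_le hs hb ha (hax.trans hxb)
  exact ⟨j, pos_of_mem_uB hbj, b, hbj, hxb⟩

/-- The elements above some `A_i` are closed under going up and, passing through some `B_j`,
under going down; connectedness does the rest. -/
theorem exists_mem_upS_uA (hc : PosetConnected α) (x : α) : ∃ i, x ∈ UpS α (uA α A0 B1 i) := by
  induction hc x0 x with
  | refl =>
    rcases hs with ⟨-, hA, -⟩ | ⟨-, -, hB⟩
    · exact ⟨0, x0, by rw [uA, unfoldAux, hA]; rfl, le_rfl⟩
    · exact exists_mem_upS_uA_of_mem_dnS_uB (j := 1) ⟨x0, by rw [uB, unfoldAux, hB]; rfl, le_rfl⟩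
  | tail _ hyz ih =>
    obtain ⟨i, a, ha, hay⟩ := ih
    rcases hyz with hyz | hzy
    · exact ⟨i, a, ha, hay.trans hyz⟩
    · obtain ⟨j, -, b, hb, hyb⟩ := exists_mem_dnS_uB_of_mem_upS_uA hs ⟨a, ha, hay⟩
      exact exists_mem_upS_uA_of_mem_dnS_uB ⟨b, hb, hzy.trans hyb⟩

end Unfolding

section Levels
variable {α : Type*} [PartialOrder α] [Finite α] {x0 : α} {A0 B1 : Set α}
  (hs : UnfoldStart α x0 A0 B1) (hc : PosetConnected α)
include hs hc

theorem alphaF_mem (x : α) : x ∈ UpS α (uA α A0 B1 (alphaF α A0 B1 x)) :=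
  Nat.sInf_mem (exists_mem_upS_uA hs hc x)

theorem betaF_mem (x : α) :
    1 ≤ betaF α A0 B1 x ∧ x ∈ DnS α (uB α A0 B1 (betaF α A0 B1 x)) :=
  Nat.sInf_mem (s := {j | 1 ≤ j ∧ x ∈ DnS α (uB α A0 B1 j)})
    (exists_mem_dnS_uB_of_mem_upS_uA hs (alphaF_mem hs hc x))

theorem alphaF_antitone : Antitone (alphaF α A0 B1) := fun u v huv => by
  obtain ⟨a, ha, hau⟩ := alphaF_mem hs hc u
  exact Nat.sInf_le ⟨a, ha, hau.trans huv⟩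

theorem betaF_monotone : Monotone (betaF α A0 B1) := fun u v huv => by
  obtain ⟨hv, b, hb, hvb⟩ := betaF_mem hs hc v
  exact Nat.sInf_le ⟨hv, b, hb, huv.trans hvb⟩

theorem mem_uA_alphaF {a : α} (ha : a ∈ minimalSet α) : a ∈ uA α A0 B1 (alphaF α A0 B1 a) := by
  obtain ⟨a', ha', ha'a⟩ := alphaF_mem hs hc a
  rwa [ha a' ha'a] at ha'

theorem mem_uB_betaF {b : α} (hb : b ∈ maximalSet α) : b ∈ uB α A0 B1 (betaF α A0 B1 b) := by
  obtain ⟨-, b', hb', hbb'⟩ := betaF_mem hs hc b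
  rwa [hb b' hbb'] at hb'

theorem alphaF_eq_of_mem_uA {i : ℕ} {a : α} (ha : a ∈ uA α A0 B1 i) : alphaF α A0 B1 a = i :=
  eq_of_mem_uA (mem_uA_alphaF hs hc (uA_subset_minimalSet hs i ha)) ha

theorem betaF_eq_of_mem_uB {j : ℕ} {b : α} (hb : b ∈ uB α A0 B1 j) : betaF α A0 B1 b = j :=
  eq_of_mem_uB (mem_uB_betaF hs hc (uB_subset_maximalSet hs j hb)) hb

theorem betaF_eq_of_mem_uA {i : ℕ} {a : α} (hi : 0 < i) (ha : a ∈ uA α A0 B1 i) :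
    betaF α A0 B1 a = i := by
  obtain ⟨k, rfl⟩ : ∃ k, i = k + 1 := ⟨i - 1, by omega⟩
  obtain ⟨b, hb, hab⟩ := ha.2.2
  have hle : betaF α A0 B1 a ≤ k + 1 := Nat.sInf_le ⟨by omega, b, hb, hab⟩
  obtain ⟨-, b', hb', hab'⟩ := betaF_mem hs hc a
  obtain ⟨i', hi', ha'⟩ := exists_mem_uA_of_le_mem_uB ha.1 hab' hb'
  have := eq_of_mem_uA ha' ha
  omega

theorem alphaF_eq_of_mem_uB {i j : ℕ} {a b : α} (ha : a ∈ uA α A0 B1 i) (hij : i < j)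
    (hb : b ∈ uB α A0 B1 j) : alphaF α A0 B1 b = j - 1 := by
  obtain ⟨k, rfl⟩ : ∃ k, j = k + 1 := ⟨j - 1, by omega⟩
  have hle : alphaF α A0 B1 b ≤ k := by
    obtain ⟨a', ha', ha'b⟩ : ∃ a' ∈ uA α A0 B1 k, a' ≤ b := by
      rcases (Nat.lt_succ_iff.1 hij).eq_or_lt with rfl | hik
      · exact exists_mem_uA_le_of_mem_uB hs ha hb
      · obtain ⟨m, rfl⟩ : ∃ m, k = m + 1 := ⟨k - 1, by omega⟩
        exact hb.2.2
    exact Nat.sInf_le ⟨a', ha', ha'b⟩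
  obtain ⟨a', ha', ha'b⟩ := alphaF_mem hs hc b
  obtain ⟨j', hj', hbj'⟩ :=
    exists_mem_uB_of_mem_uA_le hs (uB_subset_maximalSet hs _ hb) ha' ha'b
  have := eq_of_mem_uB hbj' hb
  omega

end Levels

section Main
variable {α : Type*} [PartialOrder α]

def unfoldIncPairs (A0 B1 : Set α) (r : ℕ → ℕ → Prop) : Set (α × α) :=
  {p ∈ IncPairs α (minimalSet α) (maximalSet α) |
    ∃ i j, r i j ∧ p.1 ∈ uA α A0 B1 i ∧ p.2 ∈ uB α A0 B1 j}

variable [Finite α] {x0 : α} {A0 B1 : Set α}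
  (hs : UnfoldStart α x0 A0 B1) (hc : PosetConnected α)
include hs hc

theorem incPairs_subset_unfoldIncPairs :
    IncPairs α (minimalSet α) (maximalSet α) ⊆
      unfoldIncPairs A0 B1 (fun i j => j ≤ i) ∪ unfoldIncPairs A0 B1 (· < ·) := by
  rintro p hp
  have ha := mem_uA_alphaF hs hc hp.1
  have hb := mem_uB_betaF hs hc hp.2.1
  rcases le_or_gt (betaF α A0 B1 p.2) (alphaF α A0 B1 p.1) with h | h
  · exact .inl ⟨hp, _, _, h, ha, hb⟩
  · exact .inr ⟨hp, _, _, h, ha, hb⟩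

theorem revCover_unfoldIncPairs_le {d : ℕ} (hd : 0 < d)
    (h : ∀ i, RevCover (IncPairs α (uA α A0 B1 i) (uB α A0 B1 i)) d) :
    RevCover (unfoldIncPairs A0 B1 fun i j => j ≤ i) d := by
  choose R hRcov hR using h
  have hβ : ∀ p ∈ unfoldIncPairs A0 B1 fun i j => j ≤ i, ∃ i j, j ≤ i ∧ betaF α A0 B1 p.1 = i ∧
      betaF α A0 B1 p.2 = j ∧ p ∈ IncPairs α (uA α A0 B1 i) (uB α A0 B1 j) := by
    rintro p ⟨⟨-, -, hinc⟩, i, j, hji, ha, hb⟩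
    have hj := pos_of_mem_uB hb
    exact ⟨i, j, hji, betaF_eq_of_mem_uA hs hc (by omega) ha, betaF_eq_of_mem_uB hs hc hb,
      ha, hb, hinc⟩
  refine RevCover.of_levels _ (betaF_monotone hs hc) (fun p hp => ?_) hd R hR fun p hp heq => ?_
  · obtain ⟨i, j, hji, hi, hj, -, -, hinc⟩ := hβ p hp
    exact ⟨hinc.ne, hi ▸ hj ▸ hji⟩
  · obtain ⟨i, j, -, hi, hj, hp'⟩ := hβ p hp
    obtain rfl : i = j := hi ▸ hj ▸ heq
    exact Set.mem_iUnion.1 (hi ▸ hRcov i hp')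

theorem revCover_unfoldIncPairs_lt {d : ℕ} (hd : 0 < d)
    (h : ∀ i, RevCover (IncPairs α (uA α A0 B1 i) (uB α A0 B1 (i + 1))) d) :
    RevCover (unfoldIncPairs A0 B1 (· < ·)) d := by
  choose R hRcov hR using h
  have hα : ∀ p ∈ unfoldIncPairs A0 B1 (· < ·), ∃ i j, i < j ∧ alphaF α A0 B1 p.1 = i ∧
      alphaF α A0 B1 p.2 = j - 1 ∧ p ∈ IncPairs α (uA α A0 B1 i) (uB α A0 B1 j) := by
    rintro p ⟨⟨-, -, hinc⟩, i, j, hij, ha, hb⟩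
    exact ⟨i, j, hij, alphaF_eq_of_mem_uA hs hc ha, alphaF_eq_of_mem_uB hs hc ha hij hb,
      ha, hb, hinc⟩
  refine RevCover.of_levels (OrderDual.toDual ∘ alphaF α A0 B1) (alphaF_antitone hs hc).dual_right
    (fun p hp => ?_) hd (fun n => R (OrderDual.ofDual n)) (fun n => hR _) fun p hp heq => ?_
  · obtain ⟨i, j, hij, hi, hj, -, -, hinc⟩ := hα p hp
    refine ⟨hinc.ne, ?_⟩
    change alphaF α A0 B1 p.1 ≤ alphaF α A0 B1 p.2
    omega
  · obtain ⟨i, j, hij, hi, hj, hp'⟩ := hα p hp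
    obtain rfl : j = i + 1 := by
      change alphaF α A0 B1 p.1 = alphaF α A0 B1 p.2 at heq
      omega
    change ∃ k, p ∈ R (alphaF α A0 B1 p.1) k
    exact Set.mem_iUnion.1 (hi ▸ hRcov i hp')

theorem dimAB_le_two_mul {d : ℕ}
    (hD : ∀ i, dimAB α (uA α A0 B1 i) (uB α A0 B1 i) ≤ d)
    (hO : ∀ i, dimAB α (uA α A0 B1 i) (uB α A0 B1 (i + 1)) ≤ d) :
    dimAB α (minimalSet α) (maximalSet α) ≤ 2 * d := by
  have hd : 0 < d := (dimAB_pos _ _).trans_le (hD 0)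
  have hcover := (revCover_unfoldIncPairs_le hs hc hd fun i => revCover_of_dimAB_le (hD i)).union
    (revCover_unfoldIncPairs_lt hs hc hd fun i => revCover_of_dimAB_le (hO i))
  rw [two_mul]
  exact revDim_le_of_revCover (by omega) (hcover.mono (incPairs_subset_unfoldIncPairs hs hc))

end Main

theorem stmt11_general {α : Type*} [Fintype α] [PartialOrder α]
    (hconn : PosetConnected α)
    (x0 : α) (A0 B1 : Set α) (hstart : UnfoldStart α x0 A0 B1) :
    ∃ i : ℕ,
      dimAB α (minimalSet α) (maximalSet α) ≤ 2 * dimAB α (uA α A0 B1 i) (uB α A0 B1 i) ∨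
      dimAB α (minimalSet α) (maximalSet α) ≤ 2 * dimAB α (uA α A0 B1 i) (uB α A0 B1 (i + 1)) := by
  by_contra! h
  set D := dimAB α (minimalSet α) (maximalSet α)
  have hle : D ≤ 2 * ((D - 1) / 2) :=
    dimAB_le_two_mul hstart hconn (fun i => by have := (h i).1; omega)
      fun i => by have := (h i).2; omega
  have hpos : 0 < D := dimAB_pos _ _
  omega

/-- Unfolding lemma: if `dim(A,B) ≥ 2` then some unfolding class pair
satisfies `dim(A_i,B_i) ≥ dim(A,B)/2` or `dim(A_i,B_{i+1}) ≥ dim(A,B)/2`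
(stated multiplicatively: `dim(A,B) ≤ 2 · dim(A_i,B_i)` etc.). -/
theorem stmt11 {α : Type*} [Fintype α] [PartialOrder α] [Nontrivial α]
    (hconn : PosetConnected α)
    (x0 : α) (A0 B1 : Set α) (hstart : UnfoldStart α x0 A0 B1)
    (hdim : 2 ≤ dimAB α (minimalSet α) (maximalSet α)) :
    ∃ i : ℕ,
      dimAB α (minimalSet α) (maximalSet α) ≤ 2 * dimAB α (uA α A0 B1 i) (uB α A0 B1 i) ∨
      dimAB α (minimalSet α) (maximalSet α) ≤ 2 * dimAB α (uA α A0 B1 i) (uB α A0 B1 (i + 1)) :=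
  stmt11_general hconn x0 A0 B1 hstart
end

section
/- In the unfolding setting, for every element x ≠ x_0 of a finite connected poset P, the parent y = parent(x) satisfies α(y) ≤ α(x) and β(y) ≤ β(x), where α(x) is the smallest index i ≥ 0 with x in the upset of A_i and β(x) is the smallest index j ≥ 1 with x in the downset of B_j. -/
/-!
A parent `y` of `x` is comparable with `x`, and the witness `a ∈ A_{α(x)}` or `b ∈ B_{β(x)}` in
its definition bounds one index of `y` directly. For the other index, `β(x) ∈ {α(x), α(x) + 1}`
and `B_0 = ∅` make it positive, so it is attained; as `Up(A_i)` is closed upward and `D(B_j)`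
downward, `y` lies in the same set as `x`.
-/

section Parent

variable {α : Type*} [PartialOrder α] {A0 B1 : Set α} {x y : α}

theorem mem_upS_of_le {S : Set α} (hx : x ∈ UpS α S) (hxy : x ≤ y) : y ∈ UpS α S :=
  let ⟨s, hs, hsx⟩ := hx
  ⟨s, hs, hsx.trans hxy⟩

theorem mem_dnS_of_le {S : Set α} (hy : y ∈ DnS α S) (hxy : x ≤ y) : x ∈ DnS α S :=
  let ⟨s, hs, hys⟩ := hy
  ⟨s, hs, hxy.trans hys⟩

theorem pos_of_mem_dnS_uB {j : ℕ} (hx : x ∈ DnS α (uB α A0 B1 j)) : 0 < j := by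
  obtain ⟨b, hb, -⟩ := hx
  cases j with
  | zero => simp [uB] at hb
  | succ j => exact j.succ_pos

theorem alphaF_le_of_mem_upS {i : ℕ} (hx : x ∈ UpS α (uA α A0 B1 i)) :
    alphaF α A0 B1 x ≤ i :=
  Nat.sInf_le hx

theorem betaF_le_of_mem_dnS {j : ℕ} (hx : x ∈ DnS α (uB α A0 B1 j)) :
    betaF α A0 B1 x ≤ j :=
  Nat.sInf_le ⟨pos_of_mem_dnS_uB hx, hx⟩

theorem mem_upS_uA_alphaF (hx : 0 < alphaF α A0 B1 x) :
    x ∈ UpS α (uA α A0 B1 (alphaF α A0 B1 x)) :=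
  Nat.sInf_mem (Nat.nonempty_of_pos_sInf hx)

theorem mem_dnS_uB_betaF (hx : 0 < betaF α A0 B1 x) :
    x ∈ DnS α (uB α A0 B1 (betaF α A0 B1 x)) :=
  (Nat.sInf_mem (Nat.nonempty_of_pos_sInf hx)).2

theorem alphaF_le_of_le (hx : 0 < alphaF α A0 B1 x) (hxy : x ≤ y) :
    alphaF α A0 B1 y ≤ alphaF α A0 B1 x :=
  alphaF_le_of_mem_upS (mem_upS_of_le (mem_upS_uA_alphaF hx) hxy)

theorem betaF_le_of_le (hy : 0 < betaF α A0 B1 y) (hxy : x ≤ y) :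
    betaF α A0 B1 x ≤ betaF α A0 B1 y :=
  betaF_le_of_mem_dnS (mem_dnS_of_le (mem_dnS_uB_betaF hy) hxy)

end Parent

theorem stmt12_general {α : Type*} [PartialOrder α]
    (A0 B1 : Set α)
    (x y : α) (hpar : IsParentOf α A0 B1 x y) :
    alphaF α A0 B1 y ≤ alphaF α A0 B1 x ∧ betaF α A0 B1 y ≤ betaF α A0 B1 x := by
  rcases hpar with ⟨hβα, hxy, b, hb, hyb⟩ | ⟨hβα, hyx, a, ha, hay⟩
  · have hβy : betaF α A0 B1 y ≤ betaF α A0 B1 x := betaF_le_of_mem_dnS ⟨b, hb, hyb⟩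
    have hα : 0 < alphaF α A0 B1 x := hβα ▸ pos_of_mem_dnS_uB ⟨b, hb, hyb⟩
    exact ⟨alphaF_le_of_le hα hxy.le, hβy⟩
  · exact ⟨alphaF_le_of_mem_upS ⟨a, ha, hay⟩,
      betaF_le_of_le (by omega) hyx.le⟩

/-- the parent of `x ≠ x0` satisfies `α(parent x) ≤ α(x)` and
`β(parent x) ≤ β(x)`. -/
theorem stmt12 {α : Type*} [Fintype α] [PartialOrder α] [Nontrivial α]
    (hconn : PosetConnected α)
    (x0 : α) (A0 B1 : Set α) (hstart : UnfoldStart α x0 A0 B1)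
    (x y : α) (hx : x ≠ x0) (hpar : IsParentOf α A0 B1 x y) :
    alphaF α A0 B1 y ≤ alphaF α A0 B1 x ∧ betaF α A0 B1 y ≤ betaF α A0 B1 x :=
  stmt12_general A0 B1 x y hpar
end
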